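/- arXiv:1707.04203 — 2 statements merged into one kernel-verified Lean document; each statement's English description precedes it below -/
import Mathlib

section
/- The Gaussian pdf satisfies the identity ∂_E [ exp(−(x − z√(1−E))²/(2E)) / √(2πE) ] = (e^{z²/2} / (2(1−E))) · ∂_z { e^{−z²/2} ∂_z [ exp(−(x − z√(1−E))²/(2E)) / √(2πE) ] } for all x, z ∈ ℝ and 0 < E < 1. -/
/-! The density `gaussianDensity x m v = 𝒩(x | m, v)` solves the heat equation
`∂_v 𝒩 = ½ ∂_m² 𝒩`. Along the curve `E ↦ (z√(1−E), E)` the chain rule gives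
`∂_E = −z/(2√(1−E)) ∂_m + ½ ∂_m²`, while the operator `(e^{z²/2}/(2(1−E))) ∂_z e^{−z²/2} ∂_z`
applied to `z ↦ 𝒩(x | z√(1−E), E)` equals `((1−E) ∂_m² − z√(1−E) ∂_m)/(2(1−E))`, which is the
same thing. -/

open Real

noncomputable def gaussianDensity (x m v : ℝ) : ℝ :=
  exp (-(x - m) ^ 2 / (2 * v)) / √(2 * π * v)

section GaussianDensity

variable (x : ℝ) {m v : ℝ}

theorem hasDerivAt_gaussianDensity_mean :
    HasDerivAt (fun m ↦ gaussianDensity x m v) (gaussianDensity x m v * ((x - m) / v)) m := by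
  have hexponent : HasDerivAt (fun m ↦ -(x - m) ^ 2 / (2 * v)) ((x - m) / v) m := by
    refine ((((hasDerivAt_id' m).const_sub x).fun_pow 2).fun_neg.div_const (2 * v)).congr_deriv ?_
    ring
  refine (hexponent.exp.div_const (√(2 * π * v))).congr_deriv ?_
  unfold gaussianDensity
  ring

theorem hasDerivAt_gaussianDensity_mean_mul :
    HasDerivAt (fun m ↦ gaussianDensity x m v * ((x - m) / v))
      (gaussianDensity x m v * (((x - m) / v) ^ 2 - 1 / v)) m := by
  have hscore : HasDerivAt (fun m ↦ (x - m) / v) (-1 / v) m :=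
    ((hasDerivAt_id' m).const_sub x).div_const v
  refine ((hasDerivAt_gaussianDensity_mean x).mul hscore).congr_deriv ?_
  ring

theorem HasDerivAt.gaussianDensity {μ : ℝ → ℝ} {μ' : ℝ} (hμ : HasDerivAt μ μ' v) (hv : 0 < v) :
    HasDerivAt (fun v ↦ _root_.gaussianDensity x (μ v) v)
      (_root_.gaussianDensity x (μ v) v *
        ((x - μ v) / v * μ' + (((x - μ v) / v) ^ 2 - 1 / v) / 2)) v := by
  have hexponent : HasDerivAt (fun v ↦ -(x - μ v) ^ 2 / (2 * v))
      ((x - μ v) / v * μ' + ((x - μ v) / v) ^ 2 / 2) v := by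
    refine (((hμ.const_sub x).fun_pow 2).fun_neg.div ((hasDerivAt_id' v).const_mul 2)
      (by positivity)).congr_deriv ?_
    field_simp
    ring
  have hcv : 0 < 2 * π * v := by positivity
  have hnorm : HasDerivAt (fun v ↦ √(2 * π * v)) (√(2 * π * v) / (2 * v)) v := by
    refine (((hasDerivAt_id' v).const_mul (2 * π)).sqrt hcv.ne').congr_deriv ?_
    have hsqrt : √(2 * π * v) ^ 2 = 2 * π * v := sq_sqrt hcv.le
    field_simp
    linear_combination -hsqrt
  refine (hexponent.exp.div hnorm (sqrt_pos.mpr hcv).ne').congr_deriv ?_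
  unfold _root_.gaussianDensity
  field_simp
  ring

end GaussianDensity

theorem hasDerivAt_exp_neg_sq_div_two_mul {f : ℝ → ℝ} {f' z : ℝ} (hf : HasDerivAt f f' z) :
    HasDerivAt (fun z ↦ exp (-z ^ 2 / 2) * f z) (exp (-z ^ 2 / 2) * (f' - z * f z)) z := by
  have hweight : HasDerivAt (fun z ↦ exp (-z ^ 2 / 2)) (exp (-z ^ 2 / 2) * -z) z := by
    refine (((hasDerivAt_id' z).fun_pow 2).fun_neg.div_const 2).exp.congr_deriv ?_
    ring
  refine (hweight.mul hf).congr_deriv ?_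
  ring

/-- The Gaussian pdf `𝒩(x | z√(1−E), E)` satisfies, for `0 < E < 1`,
`∂_E 𝒩(x|z√(1−E),E) = (e^{z²/2}/(2(1−E))) ∂_z { e^{−z²/2} ∂_z 𝒩(x|z√(1−E),E) }`. -/
theorem stmt_2 (x z E : ℝ) (hE : E ∈ Set.Ioo (0:ℝ) 1) :
    deriv (fun E' : ℝ =>
        Real.exp (-(x - z * Real.sqrt (1 - E'))^2 / (2 * E')) / Real.sqrt (2 * Real.pi * E')) E
      = Real.exp (z^2 / 2) / (2 * (1 - E)) *
        deriv (fun z' : ℝ => Real.exp (-z'^2 / 2) *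
          deriv (fun z'' : ℝ =>
            Real.exp (-(x - z'' * Real.sqrt (1 - E))^2 / (2 * E)) /
              Real.sqrt (2 * Real.pi * E)) z') z := by
  obtain ⟨hE0, hE1⟩ := hE
  have hK : ∀ m v, exp (-(x - m) ^ 2 / (2 * v)) / √(2 * π * v) = gaussianDensity x m v :=
    fun _ _ ↦ rfl
  simp only [hK]
  set s := √(1 - E) with hs
  have hs_pos : 0 < s := sqrt_pos.mpr (by linarith)
  have hs_sq : s ^ 2 = 1 - E := sq_sqrt (by linarith)
  have hmean : HasDerivAt (fun E' ↦ z * √(1 - E')) (-z / (2 * s)) E := by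
    refine ((((hasDerivAt_id' E).const_sub 1).sqrt (by linarith)).const_mul z).congr_deriv ?_
    ring
  have hinner : ∀ u, HasDerivAt (fun z'' ↦ gaussianDensity x (z'' * s) E)
      (gaussianDensity x (u * s) E * ((x - u * s) / E) * s) u := fun u ↦
    (hasDerivAt_gaussianDensity_mean x).comp u ((hasDerivAt_id' u).mul_const s) |>.congr_deriv
      (by ring)
  have houter : HasDerivAt (fun z' ↦ exp (-z' ^ 2 / 2) * (gaussianDensity x (z' * s) E *
        ((x - z' * s) / E) * s))
      (exp (-z ^ 2 / 2) * (gaussianDensity x (z * s) E * (((x - z * s) / E) ^ 2 - 1 / E) * s ^ 2 -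
        z * (gaussianDensity x (z * s) E * ((x - z * s) / E) * s))) z :=
    hasDerivAt_exp_neg_sq_div_two_mul <|
      ((hasDerivAt_gaussianDensity_mean_mul x).comp z ((hasDerivAt_id' z).mul_const s)).mul_const s
        |>.congr_deriv (by ring)
  have hweight : exp (z ^ 2 / 2) / (2 * s ^ 2) * exp (-z ^ 2 / 2) = 1 / (2 * s ^ 2) := by
    rw [div_mul_eq_mul_div, ← exp_add, neg_div, add_neg_cancel, exp_zero]
  rw [(hmean.gaussianDensity x hE0).deriv, funext fun u ↦ (hinner u).deriv, houter.deriv, ← hs,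
    ← hs_sq, ← mul_assoc, hweight]
  field_simp
  ring
end

section
/- With the coupling matrix J as above and any function m : Fin Γ → [0,1], the difference of consecutive row-averages satisfies |∑_c J_{r,c} m(c) − ∑_c J_{r−1,c} m(c)| ≤ (max_c m(c) restricted to the common support) · (1/((2w+1)g)) · (2w·(g_*/w) + 2ḡ) < (g_* + ḡ)/(w·g) · sup m, for any interior row r (i.e. w+1 ≤ r ≤ Γ−w). -/
/-!
With `G k = g (k / w)`, row `ρ` of `J` is the window kernel `G (· - ρ)` normalised by its row
sum, which is at least `2 w g̲` because the window `[ρ - w, ρ + w)` lies inside the grid.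
Since `a / A - b / B = (a - b) / A + b (B - A) / (A B)`, the `ℓ¹` distance between consecutive
rows is at most `(∑ |ΔG| + |B - A|) / A`. The difference of row sums telescopes to the value of
`G` at the right edge of the grid, which is one more step of the total variation of `G`; and that
total variation is at most `2 g_*` (the `2 w` Lipschitz steps inside the support) plus `ḡ` at
each end of the support. Pairing with `0 ≤ m` costs a factor `sup m`.
-/

open Finset

theorem abs_sum_mul_sub_sum_mul_le {ι : Type*} (s : Finset ι) (x y m : ι → ℝ) {M : ℝ}
    (hm : ∀ i ∈ s, 0 ≤ m i) (hmM : ∀ i ∈ s, m i ≤ M) :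
    |∑ i ∈ s, x i * m i - ∑ i ∈ s, y i * m i| ≤ (∑ i ∈ s, |x i - y i|) * M := by
  rw [← sum_sub_distrib, sum_mul]
  refine (abs_sum_le_sum_abs _ _).trans (sum_le_sum fun i hi => ?_)
  rw [← sub_mul, abs_mul, abs_of_nonneg (hm i hi)]
  exact mul_le_mul_of_nonneg_left (hmM i hi) (abs_nonneg _)

theorem sum_abs_div_sum_sub_div_sum_le {ι : Type*} (s : Finset ι) (a b : ι → ℝ)
    (hb : ∀ i ∈ s, 0 ≤ b i) (ha : 0 < ∑ i ∈ s, a i) (hb' : 0 < ∑ i ∈ s, b i) :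
    ∑ i ∈ s, |a i / ∑ j ∈ s, a j - b i / ∑ j ∈ s, b j|
      ≤ (∑ i ∈ s, |a i - b i| + |∑ i ∈ s, b i - ∑ i ∈ s, a i|) / ∑ i ∈ s, a i := by
  set A := ∑ i ∈ s, a i
  set B := ∑ i ∈ s, b i
  have hsplit : ∀ i, a i / A - b i / B = (a i - b i) / A + b i * (B - A) / (A * B) := by
    intro i
    field_simp
    ring
  calc ∑ i ∈ s, |a i / A - b i / B|
      ≤ ∑ i ∈ s, (|a i - b i| / A + b i * |B - A| / (A * B)) := by
        refine sum_le_sum fun i hi => ?_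
        rw [hsplit]
        refine (abs_add_le _ _).trans_eq ?_
        rw [abs_div, abs_div, abs_mul, abs_of_pos ha, abs_of_nonneg (hb i hi),
          abs_of_pos (mul_pos ha hb')]
    _ = (∑ i ∈ s, |a i - b i| + |B - A|) / A := by
        rw [sum_add_distrib, ← sum_div, ← sum_div, ← sum_mul]
        change _ / A + B * |B - A| / (A * B) = _
        field_simp

theorem sum_fin_sub_eq_sum_Ico {M : Type*} [AddCommMonoid M] (f : ℤ → M) (n : ℕ) (ρ : ℤ) :
    ∑ c : Fin n, f ((c : ℕ) - ρ) = ∑ k ∈ Ico (-ρ) (n - ρ), f k := by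
  rw [Int.Ico_eq_finset_map, sum_map, Fin.sum_univ_eq_sum_range (fun c => f (c - ρ))]
  simp [sub_eq_neg_add]

theorem Int.card_Ico_neg_self (w : ℕ) : #(Ico (-(w : ℤ)) w) = 2 * w := by
  rw [Int.card_Ico]; omega

theorem sum_Ico_int_sub {M : Type*} [AddCommGroup M] (f : ℤ → M) {a b : ℤ} (hab : a ≤ b) :
    ∑ k ∈ Ico a b, (f (k + 1) - f k) = f b - f a := by
  induction b, hab using Int.leInduction with
  | base => simp
  | succ b hab ih =>
    rw [← insert_Ico_right_eq_Ico_add_one hab, sum_insert (by simp), ih]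
    abel

structure IsWindowKernel (G : ℤ → ℝ) (w : ℕ) (lo hi : ℝ) : Prop where
  eq_zero : ∀ k : ℤ, (w : ℤ) < |k| → G k = 0
  bounds : ∀ k : ℤ, |k| ≤ w → lo ≤ G k ∧ G k ≤ hi

noncomputable def normalizedRow (G : ℤ → ℝ) (Γ : ℕ) (ρ : ℤ) (c : Fin Γ) : ℝ :=
  G ((c : ℕ) - ρ) / ∑ c' : Fin Γ, G ((c' : ℕ) - ρ)

namespace IsWindowKernel

variable {G : ℤ → ℝ} {w : ℕ} {gl gu gs : ℝ}

theorem nonneg (hG : IsWindowKernel G w gl gu) (hgl : 0 ≤ gl) (k : ℤ) : 0 ≤ G k := by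
  rcases le_or_gt |k| w with hk | hk
  · exact hgl.trans (hG.bounds k hk).1
  · exact (hG.eq_zero k hk).ge

theorem two_mul_mul_le_sum_Ico (hG : IsWindowKernel G w gl gu) (hgl : 0 ≤ gl) {a b : ℤ}
    (ha : a ≤ -w) (hb : w ≤ b) : 2 * w * gl ≤ ∑ k ∈ Ico a b, G k := by
  calc 2 * w * gl = ∑ _k ∈ Ico (-(w : ℤ)) w, gl := by
        rw [sum_const, Int.card_Ico_neg_self, nsmul_eq_mul, Nat.cast_mul, Nat.cast_ofNat]
    _ ≤ ∑ k ∈ Ico (-(w : ℤ)) w, G k :=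
        sum_le_sum fun k hk => (hG.bounds k (by rw [mem_Ico] at hk; rw [abs_le]; omega)).1
    _ ≤ ∑ k ∈ Ico a b, G k :=
        sum_le_sum_of_subset_of_nonneg (Ico_subset_Ico ha hb) fun k _ _ => hG.nonneg hgl k

theorem sum_Ico_abs_sub_add_one_le (hG : IsWindowKernel G w gl gu) (hw : 0 < w) (hgl : 0 ≤ gl)
    (hlip : ∀ k k' : ℤ, |k| ≤ w → |k'| ≤ w → |G k - G k'| ≤ gs / w * |(k : ℝ) - k'|)
    {a b : ℤ} (ha : a ≤ -w - 1) (hb : w + 1 ≤ b) :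
    ∑ k ∈ Ico a b, |G k - G (k + 1)| ≤ 2 * gs + 2 * gu := by
  have hsupp : ∑ k ∈ Ico (-(w : ℤ) - 1) (w + 1), |G k - G (k + 1)|
      = ∑ k ∈ Ico a b, |G k - G (k + 1)| := by
    refine sum_subset (Ico_subset_Ico ha hb) fun k hk hk' => ?_
    rw [mem_Ico] at hk hk'
    rw [hG.eq_zero k (by rw [lt_abs]; omega), hG.eq_zero (k + 1) (by rw [lt_abs]; omega),
      sub_self, abs_zero]
  have hsplit : Ico (-(w : ℤ) - 1) (w + 1)
      = insert (-(w : ℤ) - 1) (insert (w : ℤ) (Ico (-(w : ℤ)) w)) := by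
    rw [insert_Ico_right_eq_Ico_add_one (by omega), insert_Ico_left_eq_Ico_sub_one (by omega)]
  have habs : ∀ k : ℤ, |k| ≤ w → |G k| ≤ gu := fun k hk => by
    rw [abs_of_nonneg (hG.nonneg hgl k)]
    exact (hG.bounds k hk).2
  have hleft : |G (-w - 1) - G (-w - 1 + 1)| ≤ gu := by
    rw [hG.eq_zero (-w - 1) (by rw [lt_abs]; omega), zero_sub, abs_neg]
    exact habs _ (by rw [abs_le]; omega)
  have hright : |G w - G (w + 1)| ≤ gu := by
    rw [hG.eq_zero (w + 1) (by rw [lt_abs]; omega), sub_zero]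
    exact habs _ (by rw [abs_le]; omega)
  have hinner : ∑ k ∈ Ico (-(w : ℤ)) w, |G k - G (k + 1)| ≤ 2 * gs := by
    calc ∑ k ∈ Ico (-(w : ℤ)) w, |G k - G (k + 1)|
        ≤ ∑ _k ∈ Ico (-(w : ℤ)) w, gs / w := by
          refine sum_le_sum fun k hk => ?_
          rw [mem_Ico] at hk
          simpa using hlip k (k + 1) (by rw [abs_le]; omega) (by rw [abs_le]; omega)
      _ = 2 * gs := by
          rw [sum_const, Int.card_Ico_neg_self, nsmul_eq_mul]
          field_simp
          push_cast
          ring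
  rw [← hsupp, hsplit, sum_insert (by simp), sum_insert (by simp)]
  linarith

theorem sum_Ico_abs_sub_add_one_add_abs_sub_le (hG : IsWindowKernel G w gl gu) (hw : 0 < w)
    (hgl : 0 ≤ gl)
    (hlip : ∀ k k' : ℤ, |k| ≤ w → |k'| ≤ w → |G k - G k'| ≤ gs / w * |(k : ℝ) - k'|)
    {a b : ℤ} (ha : a ≤ -w - 1) (hb : w ≤ b) :
    ∑ k ∈ Ico a b, |G k - G (k + 1)| + |∑ k ∈ Ico a b, G (k + 1) - ∑ k ∈ Ico a b, G k|
      ≤ 2 * gs + 2 * gu := by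
  have hout : G (b + 1) = 0 := hG.eq_zero _ (by rw [lt_abs]; omega)
  rw [← sum_sub_distrib, sum_Ico_int_sub G (by omega), hG.eq_zero a (by rw [lt_abs]; omega),
    sub_zero, ← sub_zero (G b), ← hout, add_comm,
    ← sum_insert (f := fun k => |G k - G (k + 1)|) (by simp),
    insert_Ico_right_eq_Ico_add_one (by omega)]
  exact hG.sum_Ico_abs_sub_add_one_le hw hgl hlip ha (by omega)

theorem sum_abs_normalizedRow_sub_le (hG : IsWindowKernel G w gl gu) (hw : 0 < w)
    (hgl : 0 < gl)
    (hlip : ∀ k k' : ℤ, |k| ≤ w → |k'| ≤ w → |G k - G k'| ≤ gs / w * |(k : ℝ) - k'|)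
    {Γ : ℕ} {ρ : ℤ} (hleft : w + 1 ≤ ρ) (hright : ρ + w ≤ Γ) :
    ∑ c, |normalizedRow G Γ ρ c - normalizedRow G Γ (ρ - 1) c| ≤ (gs + gu) / (w * gl) := by
  have hpos : (0 : ℝ) < 2 * w * gl := by positivity
  have hA := hG.two_mul_mul_le_sum_Ico hgl.le (a := -ρ) (b := Γ - ρ) (by omega) (by omega)
  have hB := hG.two_mul_mul_le_sum_Ico hgl.le (a := -ρ + 1) (b := Γ - ρ + 1) (by omega) (by omega)
  rw [← sum_Ico_add' G] at hB
  have hTV := hG.sum_Ico_abs_sub_add_one_add_abs_sub_le hw hgl.le hlip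
    (a := -ρ) (b := Γ - ρ) (by omega) (by omega)
  have hnum : 0 ≤ 2 * gs + 2 * gu :=
    (add_nonneg (sum_nonneg fun _ _ => abs_nonneg _) (abs_nonneg _)).trans hTV
  have hsumA := sum_fin_sub_eq_sum_Ico G Γ ρ
  have hsumB := sum_fin_sub_eq_sum_Ico (fun k => G (k + 1)) Γ ρ
  have hsumD := sum_fin_sub_eq_sum_Ico (fun k => |G k - G (k + 1)|) Γ ρ
  simp only [normalizedRow, sub_sub_eq_add_sub, add_sub_right_comm _ 1 ρ]
  refine (sum_abs_div_sum_sub_div_sum_le univ _ _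
    (fun c _ => hG.nonneg hgl.le _) ?_ ?_).trans ?_
  · exact hsumA ▸ hpos.trans_le hA
  · exact hsumB ▸ hpos.trans_le hB
  rw [hsumA, hsumB, hsumD]
  calc _ ≤ (2 * gs + 2 * gu) / (2 * w * gl) := div_le_div₀ hnum hTV hpos hA
    _ = (gs + gu) / (w * gl) := by field_simp

end IsWindowKernel

theorem stmt_8_general (w Γ : ℕ) (hw : 0 < w)
    (g : ℝ → ℝ) (gl gu gs : ℝ) (hgl : 0 < gl)
    (hzero : ∀ x : ℝ, 1 < |x| → g x = 0)
    (hbound : ∀ x : ℝ, |x| ≤ 1 → gl ≤ g x ∧ g x ≤ gu)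
    (hlip : ∀ k k' : ℤ, |k| ≤ (w:ℤ) → |k'| ≤ (w:ℤ) →
      |g ((k:ℝ)/(w:ℝ)) - g ((k':ℝ)/(w:ℝ))| ≤ (gs / (w:ℝ)) * |(k:ℝ) - (k':ℝ)|)
    (J : Fin Γ → Fin Γ → ℝ)
    (hJ : ∀ r c : Fin Γ, J r c =
      g (((c.val : ℝ) - (r.val : ℝ)) / (w:ℝ)) /
        ∑ c' : Fin Γ, g (((c'.val : ℝ) - (r.val : ℝ)) / (w:ℝ)))
    (m : Fin Γ → ℝ) (hm : ∀ c, m c ∈ Set.Icc (0:ℝ) 1)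
    (r rp : Fin Γ) (hrp : rp.val + 1 = r.val)
    (hleft : w + 1 ≤ r.val) (hright : r.val + w ≤ Γ) :
    |(∑ c, J r c * m c) - ∑ c, J rp c * m c| ≤ (gs + gu) / ((w:ℝ) * gl) * (⨆ c, m c) := by
  have hw' : (0 : ℝ) < w := by exact_mod_cast hw
  set G : ℤ → ℝ := fun k => g (k / w)
  have hscale : ∀ k : ℤ, |(k : ℝ) / w| = |k| / w := fun k => by
    rw [abs_div, Nat.abs_cast, Int.cast_abs]
  have hG : IsWindowKernel G w gl gu :=
    ⟨fun k hk => hzero _ (by rw [hscale, one_lt_div hw']; exact_mod_cast hk),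
      fun k hk => hbound _ (by rw [hscale, div_le_one hw']; exact_mod_cast hk)⟩
  have hJG : ∀ ρ c : Fin Γ, J ρ c = normalizedRow G Γ (ρ : ℕ) c := fun ρ c => by
    simp only [hJ, normalizedRow, G, Int.cast_sub, Int.cast_natCast]
  have hrp' : ((rp : ℕ) : ℤ) = (r : ℕ) - 1 := by omega
  calc |(∑ c, J r c * m c) - ∑ c, J rp c * m c| ≤ (∑ c, |J r c - J rp c|) * ⨆ c, m c :=
        abs_sum_mul_sub_sum_mul_le _ _ _ _ (fun c _ => (hm c).1)
          fun c _ => le_ciSup (Set.finite_range m).bddAbove c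
    _ ≤ (gs + gu) / (w * gl) * ⨆ c, m c := by
        refine mul_le_mul_of_nonneg_right ?_ (Real.iSup_nonneg fun c => (hm c).1)
        simp only [hJG, hrp']
        exact hG.sum_abs_normalizedRow_sub_le hw hgl hlip (by omega) (by omega)

/-- Smoothness of row-averages under the coupling matrix: with `J` obtained by
row-normalizing a design function `g_w` (Lipschitz on `[−1,1]` with constant `g_*`,
pinched in `[g̲, ḡ]`, vanishing outside), for any `m : Fin Γ → [0,1]` and interior
consecutive rows `r−1, r`, the difference of row-averages is bounded by
`(g_* + ḡ)/(w g̲) · sup m`. -/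
theorem stmt_8 (w Γ : ℕ) (hw : 0 < w) (hΓ : 2 * w + 1 ≤ Γ)
    (g : ℝ → ℝ) (gl gu gs : ℝ) (hgl : 0 < gl) (hglu : gl ≤ gu) (hgs : 0 ≤ gs)
    (hzero : ∀ x : ℝ, 1 < |x| → g x = 0)
    (hbound : ∀ x : ℝ, |x| ≤ 1 → gl ≤ g x ∧ g x ≤ gu)
    (hlip : ∀ k k' : ℤ, |k| ≤ (w:ℤ) → |k'| ≤ (w:ℤ) →
      |g ((k:ℝ)/(w:ℝ)) - g ((k':ℝ)/(w:ℝ))| ≤ (gs / (w:ℝ)) * |(k:ℝ) - (k':ℝ)|)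
    (J : Fin Γ → Fin Γ → ℝ)
    (hJ : ∀ r c : Fin Γ, J r c =
      g (((c.val : ℝ) - (r.val : ℝ)) / (w:ℝ)) /
        ∑ c' : Fin Γ, g (((c'.val : ℝ) - (r.val : ℝ)) / (w:ℝ)))
    (m : Fin Γ → ℝ) (hm : ∀ c, m c ∈ Set.Icc (0:ℝ) 1)
    (r rp : Fin Γ) (hrp : rp.val + 1 = r.val)
    (hleft : w + 1 ≤ r.val) (hright : r.val + w ≤ Γ) :
    |(∑ c, J r c * m c) - ∑ c, J rp c * m c| ≤ (gs + gu) / ((w:ℝ) * gl) * (⨆ c, m c) :=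
  stmt_8_general w Γ hw g gl gu gs hgl hzero hbound hlip J hJ m hm r rp hrp hleft hright
end
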